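/- arXiv:2509.01233 — 2 statements merged into one kernel-verified Lean document; each statement's English description precedes it below -/
import Mathlib

section
/- Let f : M₁ → M₂ and g : M₂ → M₃ be Raney morphisms between MT-algebras. For a Raney morphism h, write ĥ(a) = ⨆{ h(x) | x locally closed, x ≤ a }, and let (g ⋆ f)(a) = ⨆{ g(f(x)) | x ∈ 𝓑𝓢M₁, x ≤ a }. Then for every a ∈ M₁, (g ⋆ f)^(a) = ⨆{ ĝ(f̂(x)) | x locally closed in M₁, x ≤ a }; that is, the hat of g ⋆ f equals the proximity composition ĝ ⋆ f̂. -/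
/-- An interior operator on a complete Boolean algebra (Kuratowski axioms). -/
structure MTInterior {M : Type*} [CompleteBooleanAlgebra M] (box : M → M) : Prop where
  map_top : box ⊤ = ⊤
  map_inf : ∀ a b : M, box (a ⊓ b) = box a ⊓ box b
  le_self : ∀ a : M, box a ≤ a
  le_box_box : ∀ a : M, box a ≤ box (box a)

/-- An element is open if it is a fixpoint of the interior operator. -/
def MTOpen {M : Type*} [CompleteBooleanAlgebra M] (box : M → M) (a : M) : Prop :=
  box a = a

/-- An element is closed if its complement is open. -/
def MTClosed {M : Type*} [CompleteBooleanAlgebra M] (box : M → M) (a : M) : Prop :=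
  MTOpen box aᶜ

/-- An element is saturated if it is an infimum of a set of open elements. -/
def MTSat {M : Type*} [CompleteBooleanAlgebra M] (box : M → M) (a : M) : Prop :=
  ∃ S : Set M, (∀ s ∈ S, MTOpen box s) ∧ a = sInf S

/-- An element is locally closed if it is the meet of an open and a closed element. -/
def MTLocClosed {M : Type*} [CompleteBooleanAlgebra M] (box : M → M) (a : M) : Prop :=
  ∃ u c, MTOpen box u ∧ MTClosed box c ∧ a = u ⊓ c

/-- Membership in the Boolean subalgebra `𝓑𝓢M` generated by the saturated elements. -/
inductive MTBS {M : Type*} [CompleteBooleanAlgebra M] (box : M → M) : M → Prop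
  | sat (a : M) : MTSat box a → MTBS box a
  | bot : MTBS box ⊥
  | top : MTBS box ⊤
  | inf (a b : M) : MTBS box a → MTBS box b → MTBS box (a ⊓ b)
  | sup (a b : M) : MTBS box a → MTBS box b → MTBS box (a ⊔ b)
  | compl (a : M) : MTBS box a → MTBS box aᶜ

/-- An MT-algebra is a `T₀`-algebra if every element is a supremum of elements of the
form `s ⊓ c` with `s` saturated and `c` closed. -/
def MTT0 {M : Type*} [CompleteBooleanAlgebra M] (box : M → M) : Prop :=
  ∀ a : M, a = sSup {b | (∃ s c, MTSat box s ∧ MTClosed box c ∧ b = s ⊓ c) ∧ b ≤ a}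

/-- A Raney morphism between MT-algebras. -/
structure MTRaneyHom {M M' : Type*} [CompleteBooleanAlgebra M] [CompleteBooleanAlgebra M']
    (box : M → M) (box' : M' → M') (f : M → M') : Prop where
  sat_map : ∀ a : M, MTSat box a → MTSat box' (f a)
  sat_sup : ∀ a b : M, MTSat box a → MTSat box b → f (a ⊔ b) = f a ⊔ f b
  map_bot : f ⊥ = ⊥
  sat_sInf : ∀ S : Set M, (∀ s ∈ S, MTSat box s) → f (sInf S) = sInf (f '' S)
  open_map : ∀ a : M, MTOpen box a → MTOpen box' (f a)
  map_top : f ⊤ = ⊤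
  open_sSup : ∀ S : Set M, (∀ s ∈ S, MTOpen box s) → f (sSup S) = sSup (f '' S)
  map_inf : ∀ a b : M, f (a ⊓ b) = f a ⊓ f b
  bs_sup : ∀ x y : M, MTBS box x → MTBS box y → f (x ⊔ y) = f x ⊔ f y
  approx : ∀ a : M, f a = sSup (f '' {x | MTBS box x ∧ x ≤ a})

/-- The identity Raney morphism `id_M`. -/
def raneyId {M : Type*} [CompleteBooleanAlgebra M] (box : M → M) (a : M) : M :=
  sSup {x | MTBS box x ∧ x ≤ a}

/-- The composition `g ⋆ f` of Raney morphisms. -/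
def raneyComp {M₁ M₂ M₃ : Type*} [CompleteBooleanAlgebra M₁] [CompleteBooleanAlgebra M₂]
    [CompleteBooleanAlgebra M₃] (box₁ : M₁ → M₁) (g : M₂ → M₃) (f : M₁ → M₂) (a : M₁) : M₃ :=
  sSup ((fun x => g (f x)) '' {x | MTBS box₁ x ∧ x ≤ a})

/-- A proximity morphism between MT-algebras. -/
structure MTProxHom {M M' : Type*} [CompleteBooleanAlgebra M] [CompleteBooleanAlgebra M']
    (box : M → M) (box' : M' → M') (h : M → M') : Prop where
  open_map : ∀ a : M, MTOpen box a → MTOpen box' (h a)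
  map_top : h ⊤ = ⊤
  open_inf : ∀ u v : M, MTOpen box u → MTOpen box v → h (u ⊓ v) = h u ⊓ h v
  open_sSup : ∀ S : Set M, (∀ s ∈ S, MTOpen box s) → h (sSup S) = sSup (h '' S)
  map_inf : ∀ a b : M, h (a ⊓ b) = h a ⊓ h b
  lc_finsup : ∀ S : Set M, S.Finite → (∀ x ∈ S, MTLocClosed box x) →
    h (sSup S) = sSup (h '' S)
  approx : ∀ a : M, h a = sSup (h '' {x | MTLocClosed box x ∧ x ≤ a})

/-- The map `f̂` associated to a Raney morphism `f`. -/
def mtHat {M M' : Type*} [CompleteBooleanAlgebra M] [CompleteBooleanAlgebra M']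
    (box : M → M) (f : M → M') (a : M) : M' :=
  sSup (f '' {x | MTLocClosed box x ∧ x ≤ a})


lemma raney_mono {M M' : Type*} [CompleteBooleanAlgebra M] [CompleteBooleanAlgebra M']
    {box : M → M} {box' : M' → M'} {f : M → M'} (hf : MTRaneyHom box box' f) :
    Monotone f := by
  intro a b hab
  have h := hf.map_inf a b
  rw [inf_eq_left.mpr hab] at h
  rw [h]; exact inf_le_right

lemma mt_open_sat {M : Type*} [CompleteBooleanAlgebra M] {box : M → M} {a : M}
    (h : MTOpen box a) : MTSat box a :=
  ⟨{a}, by simpa using h, sInf_singleton.symm⟩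

lemma mt_lc_bs {M : Type*} [CompleteBooleanAlgebra M] {box : M → M} {x : M}
    (h : MTLocClosed box x) : MTBS box x := by
  obtain ⟨u, c, hu, hc, rfl⟩ := h
  refine MTBS.inf _ _ (MTBS.sat _ (mt_open_sat hu)) ?_
  rw [← compl_compl c]
  exact MTBS.compl _ (MTBS.sat _ (mt_open_sat hc))

lemma raney_closed_map {M M' : Type*} [CompleteBooleanAlgebra M] [CompleteBooleanAlgebra M']
    {box : M → M} {box' : M' → M'} {f : M → M'} (hf : MTRaneyHom box box' f)
    {c : M} (hc : MTClosed box c) : MTClosed box' (f c) := by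
  have hbcc : MTBS box cᶜ := MTBS.sat _ (mt_open_sat hc)
  have hbc : MTBS box c := by
    rw [← compl_compl c]; exact MTBS.compl _ hbcc
  have hsup : f cᶜ ⊔ f c = ⊤ := by
    rw [← hf.bs_sup _ _ hbcc hbc, compl_sup_eq_top, hf.map_top]
  have hinf : f cᶜ ⊓ f c = ⊥ := by
    rw [← hf.map_inf, compl_inf_eq_bot, hf.map_bot]
  have hcompl : f c = (f cᶜ)ᶜ :=
    eq_compl_iff_isCompl.mpr ⟨disjoint_iff.mpr (by rwa [inf_comm] at hinf),
      codisjoint_iff.mpr (by rwa [sup_comm] at hsup)⟩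
  show MTOpen box' (f c)ᶜ
  rw [hcompl, compl_compl]
  exact hf.open_map _ hc

lemma raney_lc_map {M M' : Type*} [CompleteBooleanAlgebra M] [CompleteBooleanAlgebra M']
    {box : M → M} {box' : M' → M'} {f : M → M'} (hf : MTRaneyHom box box' f)
    {x : M} (hx : MTLocClosed box x) : MTLocClosed box' (f x) := by
  obtain ⟨u, c, hu, hc, rfl⟩ := hx
  exact ⟨f u, f c, hf.open_map _ hu, raney_closed_map hf hc, hf.map_inf u c⟩

lemma mtHat_lc {M M' : Type*} [CompleteBooleanAlgebra M] [CompleteBooleanAlgebra M']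
    {box : M → M} {box' : M' → M'} {f : M → M'} (hf : MTRaneyHom box box' f)
    {x : M} (hx : MTLocClosed box x) : mtHat box f x = f x := by
  refine le_antisymm (sSup_le ?_) (le_sSup ⟨x, ⟨hx, le_rfl⟩, rfl⟩)
  rintro _ ⟨y, ⟨-, hyx⟩, rfl⟩
  exact raney_mono hf hyx

/-- the hat of `g ⋆ f` equals the proximity composition `ĝ ⋆ f̂`. -/
theorem stmt_13 {M₁ M₂ M₃ : Type*} [CompleteBooleanAlgebra M₁] [CompleteBooleanAlgebra M₂]
    [CompleteBooleanAlgebra M₃]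
    (box₁ : M₁ → M₁) (box₂ : M₂ → M₂) (box₃ : M₃ → M₃)
    (hbox₁ : MTInterior box₁) (hbox₂ : MTInterior box₂) (hbox₃ : MTInterior box₃)
    (f : M₁ → M₂) (g : M₂ → M₃)
    (hf : MTRaneyHom box₁ box₂ f) (hg : MTRaneyHom box₂ box₃ g) :
    ∀ a : M₁,
      mtHat box₁ (raneyComp box₁ g f) a
        = sSup ((fun x => mtHat box₂ g (mtHat box₁ f x)) ''
            {x | MTLocClosed box₁ x ∧ x ≤ a}) := by
  intro a
  show sSup (raneyComp box₁ g f '' _) = _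
  congr 1
  apply Set.image_congr
  rintro x ⟨hx, -⟩
  have hfx : MTLocClosed box₂ (f x) := raney_lc_map hf hx
  have h3 : raneyComp box₁ g f x = g (f x) := by
    refine le_antisymm (sSup_le ?_) (le_sSup ⟨x, ⟨mt_lc_bs hx, le_rfl⟩, rfl⟩)
    rintro _ ⟨y, ⟨-, hyx⟩, rfl⟩
    exact raney_mono hg (raney_mono hf hyx)
  rw [mtHat_lc hf hx, mtHat_lc hg hfx, h3]
end

section
/- Let f : M → M′ be a Raney morphism between MT-algebras. Then f is an isomorphism in the category of MT-algebras and Raney morphisms (i.e., there exists a Raney morphism g : M′ → M with g ⋆ f = id_M and f ⋆ g = id_{M′}) if and only if the restriction of f to the saturated elements of M is a bijection onto the saturated elements of M′ which maps the open elements of M bijectively onto the open elements of M′. -/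
section AuxOne
variable {M : Type*} [CompleteBooleanAlgebra M] {box : M → M}

lemma MT.box_mono (hbox : MTInterior box) {a b : M} (h : a ≤ b) : box a ≤ box b := by
  have h1 := hbox.map_inf a b
  rw [inf_eq_left.mpr h] at h1
  rw [h1]; exact inf_le_right

lemma MT.open_bot (hbox : MTInterior box) : MTOpen box (⊥ : M) :=
  le_bot_iff.mp (hbox.le_self ⊥)

lemma MT.open_top (hbox : MTInterior box) : MTOpen box (⊤ : M) := hbox.map_top

lemma MT.open_sup (hbox : MTInterior box) {u v : M} (hu : MTOpen box u) (hv : MTOpen box v) :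
    MTOpen box (u ⊔ v) := by
  refine le_antisymm (hbox.le_self _) (sup_le ?_ ?_)
  · calc u = box u := hu.symm
      _ ≤ box (u ⊔ v) := MT.box_mono hbox le_sup_left
  · calc v = box v := hv.symm
      _ ≤ box (u ⊔ v) := MT.box_mono hbox le_sup_right

lemma MT.open_sSup (hbox : MTInterior box) {S : Set M} (hS : ∀ u ∈ S, MTOpen box u) :
    MTOpen box (sSup S) := by
  refine le_antisymm (hbox.le_self _) (sSup_le fun u hu => ?_)
  calc u = box u := (hS u hu).symm
    _ ≤ box (sSup S) := MT.box_mono hbox (le_sSup hu)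

lemma MT.sat_iff {a : M} : MTSat box a ↔ a = sInf {u | MTOpen box u ∧ a ≤ u} := by
  constructor
  · rintro ⟨S, hS, rfl⟩
    refine le_antisymm (le_sInf fun u hu => hu.2) (sInf_le_sInf ?_)
    intro u hu; exact ⟨hS u hu, sInf_le hu⟩
  · intro h; exact ⟨_, fun s hs => hs.1, h⟩

lemma MT.sat_of_open {a : M} (h : MTOpen box a) : MTSat box a :=
  ⟨{a}, by simpa using h, by simp⟩

lemma MT.sat_bot (hbox : MTInterior box) : MTSat box (⊥ : M) :=
  MT.sat_of_open (MT.open_bot hbox)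

lemma MT.sat_top (hbox : MTInterior box) : MTSat box (⊤ : M) :=
  MT.sat_of_open (MT.open_top hbox)

lemma MT.sat_inf {a b : M} (ha : MTSat box a) (hb : MTSat box b) : MTSat box (a ⊓ b) := by
  rw [MT.sat_iff]
  refine le_antisymm (le_sInf fun u hu => hu.2) (le_inf ?_ ?_)
  · calc sInf {u | MTOpen box u ∧ a ⊓ b ≤ u} ≤ sInf {u | MTOpen box u ∧ a ≤ u} :=
        sInf_le_sInf fun u hu => ⟨hu.1, inf_le_left.trans hu.2⟩
      _ = a := (MT.sat_iff.mp ha).symm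
  · calc sInf {u | MTOpen box u ∧ a ⊓ b ≤ u} ≤ sInf {u | MTOpen box u ∧ b ≤ u} :=
        sInf_le_sInf fun u hu => ⟨hu.1, inf_le_right.trans hu.2⟩
      _ = b := (MT.sat_iff.mp hb).symm

lemma MT.sat_sup (hbox : MTInterior box) {a b : M} (ha : MTSat box a) (hb : MTSat box b) :
    MTSat box (a ⊔ b) := by
  obtain ⟨A, hA, rfl⟩ := ha
  obtain ⟨B, hB, rfl⟩ := hb
  rw [MT.sat_iff]
  refine le_antisymm (le_sInf fun u hu => hu.2) ?_
  have h : sInf A ⊔ sInf B = ⨅ u ∈ A, ⨅ v ∈ B, u ⊔ v := by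
    rw [sInf_sup_eq]
    exact iInf_congr fun u => iInf_congr fun _ => sup_sInf_eq
  refine le_trans ?_ h.ge
  refine le_iInf₂ fun u hu => le_iInf₂ fun v hv => sInf_le ?_
  refine ⟨MT.open_sup hbox (hA u hu) (hB v hv), sup_le_sup (sInf_le hu) (sInf_le hv)⟩

lemma MT.sat_sInf {S : Set M} (hS : ∀ s ∈ S, MTSat box s) : MTSat box (sInf S) := by
  rw [MT.sat_iff]
  refine le_antisymm (le_sInf fun u hu => hu.2) (le_sInf fun s hs => ?_)
  calc sInf {u | MTOpen box u ∧ sInf S ≤ u} ≤ sInf {u | MTOpen box u ∧ s ≤ u} :=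
      sInf_le_sInf fun u hu => ⟨hu.1, (sInf_le hs).trans hu.2⟩
    _ = s := (MT.sat_iff.mp (hS s hs)).symm

/-- Normal form for elements of the Boolean subalgebra generated by saturated elements. -/
inductive MTNF (box : M → M) : M → Prop
  | diff (a b : M) : MTSat box a → MTSat box b → MTNF box (a ⊓ bᶜ)
  | sup (x y : M) : MTNF box x → MTNF box y → MTNF box (x ⊔ y)

lemma MT.nf_bs {x : M} (hx : MTNF box x) : MTBS box x := by
  induction hx with
  | diff a b ha hb => exact MTBS.inf _ _ (MTBS.sat _ ha) (MTBS.compl _ (MTBS.sat _ hb))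
  | sup x y _ _ ih1 ih2 => exact MTBS.sup _ _ ih1 ih2

lemma MT.nf_sat (hbox : MTInterior box) {a : M} (ha : MTSat box a) : MTNF box a := by
  have h := MTNF.diff a ⊥ ha (MT.sat_bot hbox)
  simpa using h

lemma MT.nf_inf (hbox : MTInterior box) {x y : M} (hx : MTNF box x) (hy : MTNF box y) :
    MTNF box (x ⊓ y) := by
  induction hx with
  | diff a b ha hb =>
    induction hy with
    | diff c d hc hd =>
      have h : (a ⊓ bᶜ) ⊓ (c ⊓ dᶜ) = (a ⊓ c) ⊓ (b ⊔ d)ᶜ := by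
        rw [compl_sup]; ac_rfl
      rw [h]
      exact MTNF.diff _ _ (MT.sat_inf ha hc) (MT.sat_sup hbox hb hd)
    | sup y1 y2 h1 h2 ih1 ih2 =>
      rw [inf_sup_left]
      exact MTNF.sup _ _ ih1 ih2
  | sup x1 x2 h1 h2 ih1 ih2 =>
    rw [inf_sup_right]
    exact MTNF.sup _ _ ih1 ih2

lemma MT.nf_compl (hbox : MTInterior box) {x : M} (hx : MTNF box x) : MTNF box xᶜ := by
  induction hx with
  | diff a b ha hb =>
    have h : (a ⊓ bᶜ)ᶜ = (⊤ ⊓ aᶜ) ⊔ (b ⊓ ⊥ᶜ) := by simp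
    rw [h]
    exact MTNF.sup _ _ (MTNF.diff _ _ (MT.sat_top hbox) ha) (MTNF.diff _ _ hb (MT.sat_bot hbox))
  | sup x1 x2 h1 h2 ih1 ih2 =>
    rw [compl_sup]
    exact MT.nf_inf hbox ih1 ih2

lemma MT.bs_nf (hbox : MTInterior box) {x : M} (hx : MTBS box x) : MTNF box x := by
  induction hx with
  | sat a ha => exact MT.nf_sat hbox ha
  | bot => exact MT.nf_sat hbox (MT.sat_bot hbox)
  | top => exact MT.nf_sat hbox (MT.sat_top hbox)
  | inf a b _ _ iha ihb => exact MT.nf_inf hbox iha ihb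
  | sup a b _ _ iha ihb => exact MTNF.sup _ _ iha ihb
  | compl a _ iha => exact MT.nf_compl hbox iha

lemma MT.raneyId_bs {x : M} (hx : MTBS box x) : raneyId box x = x :=
  le_antisymm (sSup_le fun _ hy => hy.2) (le_sSup ⟨hx, le_rfl⟩)

end AuxOne

section AuxTwo
variable {M M' : Type*} [CompleteBooleanAlgebra M] [CompleteBooleanAlgebra M']
  {box : M → M} {box' : M' → M'} {f : M → M'}

lemma MT.hom_mono (hf : MTRaneyHom box box' f) : Monotone f := fun a b h => by
  have h1 := hf.map_inf a b
  rw [inf_eq_left.mpr h] at h1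
  rw [h1]; exact inf_le_right

lemma MT.hom_compl (hf : MTRaneyHom box box' f) {x : M} (hx : MTBS box x) :
    f xᶜ = (f x)ᶜ := by
  have h1 : f x ⊓ f xᶜ = ⊥ := by rw [← hf.map_inf, inf_compl_eq_bot, hf.map_bot]
  have h2 : f x ⊔ f xᶜ = ⊤ := by
    rw [← hf.bs_sup x xᶜ hx (MTBS.compl _ hx), sup_compl_eq_top, hf.map_top]
  exact ((isCompl_iff.mpr ⟨disjoint_iff.mpr h1, codisjoint_iff.mpr h2⟩).compl_eq).symm

lemma MT.hom_bs (hf : MTRaneyHom box box' f) {x : M} (hx : MTBS box x) :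
    MTBS box' (f x) := by
  induction hx with
  | sat a ha => exact MTBS.sat _ (hf.sat_map a ha)
  | bot => rw [hf.map_bot]; exact MTBS.bot
  | top => rw [hf.map_top]; exact MTBS.top
  | inf a b ha hb iha ihb => rw [hf.map_inf]; exact MTBS.inf _ _ iha ihb
  | sup a b ha hb iha ihb => rw [hf.bs_sup a b ha hb]; exact MTBS.sup _ _ iha ihb
  | compl a ha iha => rw [MT.hom_compl hf ha]; exact MTBS.compl _ iha

end AuxTwo

/-- a Raney morphism is an isomorphism in the category of MT-algebras and
Raney morphisms iff its restriction to saturated elements is a bijection onto the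
saturated elements mapping the open elements bijectively onto the open elements. -/
theorem stmt_18 {M M' : Type*} [CompleteBooleanAlgebra M] [CompleteBooleanAlgebra M']
    (box : M → M) (box' : M' → M') (hbox : MTInterior box) (hbox' : MTInterior box')
    (f : M → M') (hf : MTRaneyHom box box' f) :
    (∃ g : M' → M, MTRaneyHom box' box g ∧
        (∀ a : M, raneyComp box g f a = raneyId box a) ∧
        (∀ b : M', raneyComp box' f g b = raneyId box' b)) ↔
    (Set.BijOn f {a | MTSat box a} {a | MTSat box' a} ∧
      Set.BijOn f {a | MTOpen box a} {a | MTOpen box' a}) := by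
  constructor
  · rintro ⟨g, hg, hgf, hfg⟩
    have gmono := MT.hom_mono hg
    have fmono := MT.hom_mono hf
    have gf_id : ∀ x : M, MTBS box x → g (f x) = x := by
      intro x hx
      have h1 := hgf x
      rw [MT.raneyId_bs hx] at h1
      have h2 : g (f x) ≤ raneyComp box g f x := le_sSup ⟨x, ⟨hx, le_rfl⟩, rfl⟩
      have h3 : raneyComp box g f x ≤ g (f x) := by
        refine sSup_le ?_
        rintro _ ⟨y, ⟨hy, hyx⟩, rfl⟩
        exact gmono (fmono hyx)
      exact le_antisymm (h2.trans h1.le) (h1.ge.trans h3)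
    have fg_id : ∀ y : M', MTBS box' y → f (g y) = y := by
      intro y hy
      have h1 := hfg y
      rw [MT.raneyId_bs hy] at h1
      have h2 : f (g y) ≤ raneyComp box' f g y := le_sSup ⟨y, ⟨hy, le_rfl⟩, rfl⟩
      have h3 : raneyComp box' f g y ≤ f (g y) := by
        refine sSup_le ?_
        rintro _ ⟨z, ⟨hz, hzy⟩, rfl⟩
        exact fmono (gmono hzy)
      exact le_antisymm (h2.trans h1.le) (h1.ge.trans h3)
    constructor
    · refine ⟨fun a ha => hf.sat_map a ha, ?_, ?_⟩
      · intro a ha b hb hab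
        rw [← gf_id a (MTBS.sat _ ha), hab, gf_id b (MTBS.sat _ hb)]
      · intro b hb
        exact ⟨g b, hg.sat_map b hb, fg_id b (MTBS.sat _ hb)⟩
    · refine ⟨fun a ha => hf.open_map a ha, ?_, ?_⟩
      · intro a ha b hb hab
        rw [← gf_id a (MTBS.sat _ (MT.sat_of_open ha)), hab,
          gf_id b (MTBS.sat _ (MT.sat_of_open hb))]
      · intro b hb
        exact ⟨g b, hg.open_map b hb, fg_id b (MTBS.sat _ (MT.sat_of_open hb))⟩
  · rintro ⟨hsat, hopen⟩
    -- order reflection on saturated elements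
    have sat_refl : ∀ a b : M, MTSat box a → MTSat box b → f a ≤ f b → a ≤ b := by
      intro a b ha hb h
      have h1 : f (a ⊓ b) = f a := by rw [hf.map_inf, inf_eq_left.mpr h]
      have h2 : a ⊓ b = a := hsat.2.1 (MT.sat_inf ha hb) ha h1
      exact inf_eq_left.mp h2
    -- f reflects ⊥ on normal forms
    have nf_bot : ∀ x : M, MTNF box x → f x = ⊥ → x = ⊥ := by
      intro x hx
      induction hx with
      | diff a b ha hb =>
        intro h
        rw [hf.map_inf, MT.hom_compl hf (MTBS.sat _ hb), ← sdiff_eq, sdiff_eq_bot_iff] at h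
        have hab : a ≤ b := sat_refl a b ha hb h
        rw [← sdiff_eq, sdiff_eq_bot_iff]
        exact hab
      | sup x1 x2 h1 h2 ih1 ih2 =>
        intro h
        rw [hf.bs_sup x1 x2 (MT.nf_bs h1) (MT.nf_bs h2), sup_eq_bot_iff] at h
        rw [ih1 h.1, ih2 h.2, bot_sup_eq]
    -- f reflects order on 𝓑𝓢M
    have bs_refl : ∀ x y : M, MTBS box x → MTBS box y → f x ≤ f y → x ≤ y := by
      intro x y hx hy h
      have hxy : MTBS box (x ⊓ yᶜ) := MTBS.inf _ _ hx (MTBS.compl _ hy)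
      have hb : f (x ⊓ yᶜ) = ⊥ := by
        rw [hf.map_inf, MT.hom_compl hf hy, ← sdiff_eq, sdiff_eq_bot_iff]
        exact h
      have h0 : x ⊓ yᶜ = ⊥ := nf_bot _ (MT.bs_nf hbox hxy) hb
      exact sdiff_eq_bot_iff.mp (sdiff_eq.trans h0)
    -- f is surjective from 𝓑𝓢M onto 𝓑𝓢M'
    have bs_surj : ∀ y : M', MTBS box' y → ∃ x : M, MTBS box x ∧ f x = y := by
      intro y hy
      have hnf := MT.bs_nf hbox' hy
      clear hy
      induction hnf with
      | diff a' b' ha' hb' =>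
        obtain ⟨a, ha, rfl⟩ := hsat.2.2 ha'
        obtain ⟨b, hb, rfl⟩ := hsat.2.2 hb'
        refine ⟨a ⊓ bᶜ, MTBS.inf _ _ (MTBS.sat _ ha) (MTBS.compl _ (MTBS.sat _ hb)), ?_⟩
        rw [hf.map_inf, MT.hom_compl hf (MTBS.sat _ hb)]
      | sup y1 y2 h1 h2 ih1 ih2 =>
        obtain ⟨x1, hx1, rfl⟩ := ih1
        obtain ⟨x2, hx2, rfl⟩ := ih2
        exact ⟨x1 ⊔ x2, MTBS.sup _ _ hx1 hx2, hf.bs_sup _ _ hx1 hx2⟩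
    set g : M' → M := fun b => sSup {x | MTBS box x ∧ f x ≤ b} with hgdef
    have g_spec : ∀ (b : M') (x : M), MTBS box x → f x = b → g b = x := by
      intro b x hx hfx
      rw [hgdef]
      refine le_antisymm (sSup_le ?_) (le_sSup ⟨hx, hfx.le⟩)
      rintro y ⟨hy, hyb⟩
      exact bs_refl y x hy hx (by rw [hfx]; exact hyb)
    have gmono : Monotone g := by
      intro b c h
      rw [hgdef]
      exact sSup_le_sSup fun x hx => ⟨hx.1, hx.2.trans h⟩
    have gf : ∀ x : M, MTBS box x → g (f x) = x := fun x hx => g_spec _ x hx rfl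
    have fg : ∀ y : M', MTBS box' y → f (g y) = y := by
      intro y hy
      obtain ⟨x, hx, rfl⟩ := bs_surj y hy
      rw [gf x hx]
    have gsat : ∀ b : M', MTSat box' b → MTSat box (g b) := by
      intro b hb
      obtain ⟨a, ha, rfl⟩ := hsat.2.2 hb
      rw [g_spec _ a (MTBS.sat _ ha) rfl]
      exact ha
    have gopen : ∀ b : M', MTOpen box' b → MTOpen box (g b) := by
      intro b hb
      obtain ⟨u, hu, rfl⟩ := hopen.2.2 hb
      rw [g_spec _ u (MTBS.sat _ (MT.sat_of_open hu)) rfl]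
      exact hu
    refine ⟨g, ?_, ?_, ?_⟩
    · refine ⟨gsat, ?_, g_spec ⊥ ⊥ MTBS.bot hf.map_bot, ?_, gopen,
        g_spec ⊤ ⊤ MTBS.top hf.map_top, ?_, ?_, ?_, ?_⟩
      · -- sat_sup
        intro b c hb hc
        obtain ⟨a, ha, rfl⟩ := hsat.2.2 hb
        obtain ⟨a', ha', rfl⟩ := hsat.2.2 hc
        rw [g_spec _ a (MTBS.sat _ ha) rfl, g_spec _ a' (MTBS.sat _ ha') rfl,
          ← hf.sat_sup a a' ha ha',
          g_spec _ (a ⊔ a') (MTBS.sup _ _ (MTBS.sat _ ha) (MTBS.sat _ ha')) rfl]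
      · -- sat_sInf
        intro S hS
        have hgS : ∀ b ∈ S, MTSat box (g b) := fun b hb => gsat b (hS b hb)
        have hgS' : ∀ x ∈ g '' S, MTSat box x := by
          rintro _ ⟨b, hb, rfl⟩; exact hgS b hb
        have hfi : f (sInf (g '' S)) = sInf S := by
          rw [hf.sat_sInf (g '' S) hgS']
          have h1 : (f ∘ g) '' S = id '' S :=
            Set.image_congr fun b hb => fg b (MTBS.sat _ (hS b hb))
          rw [← Set.image_comp, h1, Set.image_id]
        exact g_spec _ _ (MTBS.sat _ (MT.sat_sInf hgS')) hfi
      · -- open_sSup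
        intro S hS
        have hgS : ∀ b ∈ S, MTOpen box (g b) := fun b hb => gopen b (hS b hb)
        have hgS' : ∀ x ∈ g '' S, MTOpen box x := by
          rintro _ ⟨b, hb, rfl⟩; exact hgS b hb
        have hfi : f (sSup (g '' S)) = sSup S := by
          rw [hf.open_sSup (g '' S) hgS']
          have h1 : (f ∘ g) '' S = id '' S :=
            Set.image_congr fun b hb => fg b (MTBS.sat _ (MT.sat_of_open (hS b hb)))
          rw [← Set.image_comp, h1, Set.image_id]
        exact g_spec _ _ (MTBS.sat _ (MT.sat_of_open (MT.open_sSup hbox hgS'))) hfi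
      · -- map_inf
        intro b c
        refine le_antisymm (le_inf (gmono inf_le_left) (gmono inf_le_right)) ?_
        rw [hgdef]
        simp only
        rw [sSup_inf_sSup]
        refine iSup₂_le ?_
        rintro ⟨x, y⟩ ⟨hx, hy⟩
        refine le_sSup ⟨MTBS.inf _ _ hx.1 hy.1, ?_⟩
        rw [hf.map_inf]
        exact inf_le_inf hx.2 hy.2
      · -- bs_sup
        intro x y hx hy
        obtain ⟨a, ha, rfl⟩ := bs_surj x hx
        obtain ⟨b, hb, rfl⟩ := bs_surj y hy
        rw [gf a ha, gf b hb, ← hf.bs_sup a b ha hb, gf _ (MTBS.sup _ _ ha hb)]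
      · -- approx
        intro b
        have hset : g '' {y | MTBS box' y ∧ y ≤ b} = {x | MTBS box x ∧ f x ≤ b} := by
          ext x
          constructor
          · rintro ⟨y, ⟨hy, hyb⟩, rfl⟩
            obtain ⟨x', hx', rfl⟩ := bs_surj y hy
            rw [gf x' hx']
            exact ⟨hx', hyb⟩
          · rintro ⟨hx, hfxb⟩
            exact ⟨f x, ⟨MT.hom_bs hf hx, hfxb⟩, gf x hx⟩
        rw [hset, hgdef]
    · intro a
      have h1 : (fun x => g (f x)) '' {x | MTBS box x ∧ x ≤ a} =
          id '' {x | MTBS box x ∧ x ≤ a} :=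
        Set.image_congr fun x hx => gf x hx.1
      unfold raneyComp raneyId
      rw [h1, Set.image_id]
    · intro b
      have h1 : (fun y => f (g y)) '' {y | MTBS box' y ∧ y ≤ b} =
          id '' {y | MTBS box' y ∧ y ≤ b} :=
        Set.image_congr fun y hy => fg y hy.1
      unfold raneyComp raneyId
      rw [h1, Set.image_id]
end
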